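/- arXiv:2403.18498 — 3 statements merged into one kernel-verified Lean document; each statement's English description precedes it below -/
import Mathlib

section
/- Let R be a reduced commutative ring that is finitely generated as a ℤ-algebra, with dimension homomorphism α : R → ℤ and regular element r ∈ R. Then there exists a finite subset S ⊆ R such that for every x ∈ R, the ideal {n ∈ ℤ : n·r ∈ (x)} of ℤ is generated (as an ideal of ℤ) by the set {m ∈ ℤ : ∃ s ∈ S with s·x = m·r}; equivalently K_r(x) = K_r^S(x) for all x ∈ R. -/
/-!
Write `a = α r` and let `M` be the finite set of minimal primes containing `r`. As `R` is reduced
and `z * r = α z • r`, an element `z` equals `m • r` exactly when `α z = m * a` and `z` lies in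
every prime of `M`. Hence `y * x = n • r` iff `α y * α x = n * a` and `y` lies in the intersection
`J` of the primes of `M` avoiding `x`. If `α J = (α y₀)` with `y₀ ∈ J` and `B = α y₀ * α x`, the
Knutson ideal of `x` is generated by `B / gcd(B, a)`, and this generator is attained by
`s = (a / gcd(B, a)) • y₀`. Since `J` and the divisor `gcd(B, a)` of `a` take finitely many values,
so does `s`.
-/

theorem eq_zero_of_mul_eq_zero_of_forall_minimalPrimes {R : Type*} [CommRing R] [IsReduced R]
    {r z : R} (hzr : z * r = 0) (hz : ∀ p ∈ minimalPrimes R, r ∈ p → z ∈ p) : z = 0 := by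
  have hmem : z ∈ sInf (minimalPrimes R) := Submodule.mem_sInf.mpr fun p hp => by
    by_cases hrp : r ∈ p
    · exact hz p hp hrp
    · exact (hp.1.1.mem_or_mem (hzr ▸ p.zero_mem)).resolve_right hrp
  rw [minimalPrimes, Ideal.sInf_minimalPrimes] at hmem
  exact (mem_nilradical.mp hmem).eq_zero

theorem Ideal.exists_mem_map_eq_span_singleton {R A : Type*} [CommRing R] [CommRing A]
    [IsPrincipalIdealRing A] {f : R →+* A} (hf : Function.Surjective f) (J : Ideal R) :
    ∃ y ∈ J, J.map f = Ideal.span {f y} := by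
  obtain ⟨y, hy, hfy⟩ := (Ideal.mem_map_iff_of_surjective f hf).mp
    (Submodule.IsPrincipal.generator_mem (J.map f))
  exact ⟨y, hy, by rw [hfy, Ideal.span_singleton_generator]⟩

theorem Int.ediv_gcd_dvd_of_dvd_mul {a b n : ℤ} (ha : a ≠ 0) (h : b ∣ n * a) :
    b / b.gcd a ∣ n := by
  have hg : (b.gcd a : ℤ) ≠ 0 := by simp [Int.gcd_eq_zero_iff, ha]
  rw [← Int.mul_dvd_mul_iff_left hg, Int.mul_ediv_cancel' (Int.gcd_dvd_left b a), Int.coe_gcd]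
  exact dvd_gcd_mul_iff_dvd_mul.mpr (mul_comm n a ▸ h)

theorem Ideal.zsmul_mem_of_mem_span {R : Type*} [CommRing R] {I : Ideal R} {r : R} {A : Set ℤ}
    (h : ∀ m ∈ A, m • r ∈ I) {n : ℤ} (hn : n ∈ Ideal.span A) : n • r ∈ I :=
  Ideal.span_le (I := (I.restrictScalars ℤ).comap (LinearMap.toSpanSingleton ℤ R r)) |>.mpr h hn

def inverseSet {R : Type*} [CommRing R] [DecidableEq R] (M : Finset (Ideal R))
    (gen : Finset (Ideal R) → R) (a : ℤ) : Finset R :=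
  (M.powerset ×ˢ a.natAbs.divisors).image fun Tg => (a / Tg.2) • gen Tg.1

section Regular

variable {R : Type*} [CommRing R] (α : R →+* ℤ) {r : R}

theorem eq_zsmul_iff_of_regular [IsReduced R] (hreg : ∀ y : R, y * r = α y • r)
    {z : R} {m : ℤ} :
    z = m • r ↔ α z = m * α r ∧ ∀ p ∈ minimalPrimes R, r ∈ p → z ∈ p := by
  refine ⟨?_, fun ⟨hα, hp⟩ => sub_eq_zero.mp ?_⟩
  · rintro rfl
    exact ⟨by simp, fun p _ hrp => p.smul_of_tower_mem m hrp⟩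
  · refine eq_zero_of_mul_eq_zero_of_forall_minimalPrimes (r := r) ?_ fun p hpm hrp => ?_
    · rw [hreg, map_sub, map_zsmul, hα, smul_eq_mul, sub_self, zero_smul]
    · exact p.sub_mem (hp p hpm hrp) (p.smul_of_tower_mem m hrp)

variable {M : Finset (Ideal R)} (hM : ∀ p, p ∈ M ↔ p ∈ minimalPrimes R ∧ r ∈ p)
include hM

open Classical in
theorem mul_eq_zsmul_iff_of_regular [IsReduced R] (hreg : ∀ y : R, y * r = α y • r)
    {x y : R} {m : ℤ} :
    y * x = m • r ↔ y ∈ (M.filter (x ∉ ·)).inf id ∧ α y * α x = m * α r := by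
  rw [eq_zsmul_iff_of_regular α hreg, map_mul, and_comm, Submodule.mem_finsetInf]
  refine and_congr_left fun _ => ⟨fun h p hp => ?_, fun h p hpm hrp => ?_⟩
  · obtain ⟨hpM, hxp⟩ := Finset.mem_filter.mp hp
    obtain ⟨hpm, hrp⟩ := (hM p).mp hpM
    exact ((hpm.1.1.mem_or_mem (h p hpm hrp))).resolve_right hxp
  · by_cases hxp : x ∈ p
    · exact p.mul_mem_left y hxp
    · exact p.mul_mem_right x (h p (Finset.mem_filter.mpr ⟨(hM p).mpr ⟨hpm, hrp⟩, hxp⟩))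

theorem exists_mem_inverseSet_dvd [IsReduced R] [DecidableEq R] (hr : α r ≠ 0)
    (hreg : ∀ y : R, y * r = α y • r) {gen : Finset (Ideal R) → R}
    (hgen : ∀ T : Finset (Ideal R), gen T ∈ T.inf id ∧ (T.inf id).map α = Ideal.span {α (gen T)})
    (x : R) :
    ∃ w : ℤ, (∃ s ∈ inverseSet M gen (α r), s * x = w • r) ∧
      ∀ n : ℤ, n • r ∈ Ideal.span {x} → w ∣ n := by
  classical
  set T := M.filter (x ∉ ·)
  obtain ⟨hyT, hmap⟩ := hgen T
  set B := α (gen T) * α x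
  set g := B.gcd (α r)
  refine ⟨B / g, ⟨(α r / g) • gen T, ?_, ?_⟩, fun n hn => ?_⟩
  · exact Finset.mem_image.mpr ⟨(T, g), Finset.mem_product.mpr
      ⟨Finset.mem_powerset.mpr (Finset.filter_subset _ _),
        Nat.mem_divisors.mpr ⟨Int.gcd_dvd_natAbs_right _ _, Int.natAbs_ne_zero.mpr hr⟩⟩, rfl⟩
  · refine (mul_eq_zsmul_iff_of_regular α hM hreg).mpr
      ⟨(T.inf id).smul_of_tower_mem _ hyT, ?_⟩
    rw [map_zsmul, smul_eq_mul, mul_assoc, ← Int.mul_ediv_assoc' _ (Int.gcd_dvd_right _ _),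
      ← Int.mul_ediv_assoc' _ (Int.gcd_dvd_left _ _), mul_comm]
  · obtain ⟨y, hy⟩ := Ideal.mem_span_singleton'.mp hn
    obtain ⟨hyJ, hα⟩ := (mul_eq_zsmul_iff_of_regular α hM hreg).mp hy
    obtain ⟨e, he⟩ := Ideal.mem_span_singleton.mp (hmap ▸ Ideal.mem_map_of_mem α hyJ)
    exact Int.ediv_gcd_dvd_of_dvd_mul hr ⟨e, by rw [← hα, he]; ring⟩

end Regular

/-- Let `R` be a reduced commutative ring, finitely generated as a
`ℤ`-algebra, with dimension homomorphism `α : R → ℤ` and regular element `r ∈ R`.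
Then there is a finite subset `S ⊆ R` such that for all `x ∈ R` the ideal
`{n : ℤ | n • r ∈ (x)}` of `ℤ` is generated by `{m : ℤ | ∃ s ∈ S, s * x = m • r}`;
equivalently `K_r(x) = K_r^S(x)` for all `x ∈ R`. -/
theorem exists_finite_inverse_set {R : Type*} [CommRing R] [IsReduced R]
    [Algebra.FiniteType ℤ R]
    (α : R →+* ℤ) (r : R) (hr : α r ≠ 0) (hreg : ∀ y : R, y * r = α y • r) :
    ∃ S : Finset R, ∀ x : R, ∀ n : ℤ,
      n • r ∈ Ideal.span ({x} : Set R) ↔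
        n ∈ Ideal.span {m : ℤ | ∃ s ∈ S, s * x = m • r} := by
  classical
  have := Algebra.FiniteType.isNoetherianRing ℤ R
  let M := (minimalPrimes.finite_of_isNoetherianRing R).toFinset.filter (r ∈ ·)
  have hM : ∀ p, p ∈ M ↔ p ∈ minimalPrimes R ∧ r ∈ p := by simp [M]
  have hα : Function.Surjective α := fun n => ⟨n, map_intCast α n⟩
  choose gen hgen using fun T : Finset (Ideal R) =>
    Ideal.exists_mem_map_eq_span_singleton hα (T.inf id)
  refine ⟨inverseSet M gen (α r), fun x n => ⟨fun hn => ?_, fun hn => ?_⟩⟩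
  · obtain ⟨w, hwS, hdvd⟩ := exists_mem_inverseSet_dvd α hM hr hreg hgen x
    obtain ⟨k, rfl⟩ := hdvd n hn
    exact Ideal.mul_mem_right k _ (Ideal.subset_span hwS)
  · refine Ideal.zsmul_mem_of_mem_span ?_ hn
    rintro m ⟨s, -, hs⟩
    exact Ideal.mem_span_singleton'.mpr ⟨s, hs⟩
end

section
/- Let G be a finite group and N a normal subgroup of G. If N has a complement in G (i.e. the extension 1 → N → G → G/N → 1 splits), then for every prime p and every Sylow p-subgroup P of G, N∩P has a complement in P. -/
/-!
A Sylow `p`-subgroup of the complement `H`, conjugated into `P`, stays disjoint from the normal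
subgroup `N` and has order `|H|_p = |G/N|_p`. The image of `P` in `G/N` is a Sylow subgroup, so
this is also the order of `P/(N ∩ P)`.
-/

open scoped Pointwise

theorem Subgroup.card_map_mul_card_ker_inf {G G' : Type*} [Group G] [Group G'] (f : G →* G')
    (P : Subgroup G) : Nat.card (P.map f) * Nat.card (f.ker ⊓ P : Subgroup G) = Nat.card P := by
  have h := (f.ker.subgroupOf P).card_mul_index
  rw [← f.ker_domRestrict, Subgroup.index_ker, MonoidHom.domRestrict_range,
    MonoidHom.ker_domRestrict, ← Subgroup.inf_subgroupOf_right,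
    Nat.card_congr (Subgroup.subgroupOfEquivOfLe inf_le_right).toEquiv] at h
  rw [← h, mul_comm]

theorem Subgroup.inf_eq_bot_of_le_conj_smul {G : Type*} [Group G] {H K N : Subgroup G}
    [N.Normal] {g : G} (hHN : H ⊓ N = ⊥) (hKH : K ≤ MulAut.conj g • H) : K ⊓ N = ⊥ := by
  refine le_bot_iff.mp ?_
  calc K ⊓ N ≤ MulAut.conj g • H ⊓ MulAut.conj g • N := by
        rw [Subgroup.Normal.conj_smul_eq_self g N]; exact inf_le_inf_right N hKH
    _ = ⊥ := by rw [← Subgroup.smul_inf, hHN, Subgroup.smul_bot]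

theorem Sylow.exists_le_card_eq_le_conj_smul {G : Type*} [Group G] [Finite G] {p : ℕ}
    [Fact p.Prime] (H : Subgroup G) (P : Sylow p G) :
    ∃ K : Subgroup G, K ≤ P ∧ Nat.card K = p ^ (Nat.card H).factorization p ∧
      ∃ g : G, K ≤ MulAut.conj g • H := by
  obtain ⟨Q⟩ : Nonempty (Sylow p H) := inferInstance
  obtain ⟨P', hQP'⟩ := (Q.2.map H.subtype).exists_le_sylow
  obtain ⟨g, rfl⟩ := MulAction.exists_smul_eq G P' P
  refine ⟨MulAut.conj g • (Q : Subgroup H).map H.subtype,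
    Subgroup.pointwise_smul_le_pointwise_smul_iff.mpr hQP', ?_, g,
    Subgroup.pointwise_smul_le_pointwise_smul_iff.mpr (Subgroup.map_subtype_le _)⟩
  rw [Nat.card_congr (Subgroup.equivSMul _ _).toEquiv.symm,
    Subgroup.card_map_of_injective H.subtype_injective, Q.card_eq_multiplicity]

/-- Let `G` be a finite group and `N ⊴ G`. If `N` has a complement
in `G` (the extension `1 → N → G → G/N → 1` splits), then for every prime `p` and
every Sylow `p`-subgroup `P` of `G`, `N ∩ P` has a complement in `P`. -/
theorem sylow_complements_of_complement {G : Type*} [Group G] [Finite G]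
    (N : Subgroup G) [N.Normal]
    (h : ∃ H : Subgroup G, H ⊓ N = ⊥ ∧ Nat.card H * Nat.card N = Nat.card G) :
    ∀ p : ℕ, p.Prime → ∀ P : Sylow p G,
      ∃ K : Subgroup G, K ≤ (P : Subgroup G) ∧ K ⊓ N = ⊥ ∧
        Nat.card K * Nat.card (N ⊓ (P : Subgroup G) : Subgroup G) =
          Nat.card (P : Subgroup G) := by
  obtain ⟨H, hHN, hcard⟩ := h
  intro p hp P
  have : Fact p.Prime := ⟨hp⟩
  obtain ⟨K, hKP, hKcard, g, hKH⟩ := P.exists_le_card_eq_le_conj_smul H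
  refine ⟨K, hKP, Subgroup.inf_eq_bot_of_le_conj_smul hHN hKH, ?_⟩
  have hquot : Nat.card (G ⧸ N) = Nat.card H := by
    refine Nat.eq_of_mul_eq_mul_right (Nat.card_pos (α := N)) ?_
    rw [← N.card_eq_card_quotient_mul_card_subgroup, hcard]
  have himage : Nat.card ((P : Subgroup G).map (QuotientGroup.mk' N)) = Nat.card K := by
    rw [hKcard, ← hquot,
      ← (P.mapSurjective (QuotientGroup.mk'_surjective N)).card_eq_multiplicity]
    rfl
  rw [← himage, ← (P : Subgroup G).card_map_mul_card_ker_inf (QuotientGroup.mk' N),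
    QuotientGroup.ker_mk']
end

section
/- Let G be a finite nilpotent group and N a normal subgroup of G. The following are equivalent: (i) N has a complement in G (the extension 1 → N → G → G/N → 1 splits); (ii) for every prime p and every Sylow p-subgroup P of G, N∩P has a complement in P; (iii) the Knutson subindex 𝒦(G,N), the greatest common divisor of Ind(G,N), equals 1. -/
/-- `Ind(G,N)`: the set of `m ∈ ℕ` such that there is a subgroup `K ≤ G` with
`K ∩ N = {e}` and `m·|N|·|K| = |G|`. -/
def knutsonInd {G : Type*} [Group G] (N : Subgroup G) : Set ℕ :=
  {m | ∃ K : Subgroup G, K ⊓ N = ⊥ ∧ m * Nat.card N * Nat.card K = Nat.card G}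

/-- `d` is the greatest common divisor of the set `S ⊆ ℕ`: it divides every element
of `S`, and every common divisor of `S` divides `d`. -/
def IsGCDOf (S : Set ℕ) (d : ℕ) : Prop :=
  (∀ m ∈ S, d ∣ m) ∧ ∀ c : ℕ, (∀ m ∈ S, c ∣ m) → c ∣ d

/-! In a finite nilpotent group every Sylow subgroup `Pₚ` is normal, so for every subgroup `K`
the intersection `K ⊓ Pₚ` is a Sylow `p`-subgroup of `K`, and `|K| = ∏ₚ |K ⊓ Pₚ|`.

Hence `N ⊓ Pₚ` has a complement in `Pₚ` iff some `K` with `K ⊓ N = ⊥` has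
`vₚ|K| + vₚ|N| = vₚ|G|`, i.e. iff the element `|G| / (|N|·|K|)` of `Ind(G,N)` is prime
to `p`.
So (ii) says that no prime divides all of `Ind(G,N)`, which is (iii).

Conversely, complements `Kₚ ≤ Pₚ` for the various primes commute and have coprime orders, so
they generate their internal direct product `H`. Then `H ⊓ Pₚ = Kₚ` for every `p`, and
decomposing `|H ⊓ N|` and `|H|·|N|` into Sylow factors shows that `H` complements `N`. -/

theorem Set.Finite.isGCDOf_gcd {S : Set ℕ} (hS : S.Finite) : IsGCDOf S (hS.toFinset.gcd id) :=
  ⟨fun _ hm => Finset.gcd_dvd (hS.mem_toFinset.2 hm),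
    fun _ hc => Finset.dvd_gcd fun m hm => hc m (hS.mem_toFinset.1 hm)⟩

theorem forall_isGCDOf_eq_one_iff {S : Set ℕ} (hS : S.Finite) :
    (∀ d, IsGCDOf S d → d = 1) ↔ ∀ p, p.Prime → ∃ m ∈ S, ¬ p ∣ m := by
  constructor
  · intro h p hp
    by_contra! hpS
    have hpd : p ∣ hS.toFinset.gcd id := (hS.isGCDOf_gcd).2 p hpS
    exact hp.not_dvd_one (h _ hS.isGCDOf_gcd ▸ hpd)
  · rintro h d ⟨hdS, -⟩
    by_contra hd
    obtain ⟨p, hp, hpd⟩ := Nat.exists_prime_and_dvd hd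
    obtain ⟨m, hm, hpm⟩ := h p hp
    exact hpm (hpd.trans (hdS m hm))

theorem Nat.not_dvd_iff_factorization_eq_of_mul_eq {m a n p : ℕ} (hp : p.Prime) (h : m * a = n)
    (hn : n ≠ 0) : ¬ p ∣ m ↔ a.factorization p = n.factorization p := by
  obtain ⟨hm, ha⟩ := mul_ne_zero_iff.1 (h ▸ hn)
  rw [← h, Nat.factorization_mul hm ha, Finsupp.add_apply, hp.dvd_iff_one_le_factorization hm]
  omega

theorem Nat.prod_pow_factorization_of_primeFactors_subset {n : ℕ} {s : Finset ℕ} (hn : n ≠ 0)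
    (hs : n.primeFactors ⊆ s) : ∏ p ∈ s, p ^ n.factorization p = n := by
  rw [← Finset.prod_subset hs, ← Nat.prod_primeFactors_pow_factorization hn]
  intro p _ hp
  rw [Finsupp.notMem_support_iff.mp (n.support_factorization ▸ hp), pow_zero]

namespace Subgroup

variable {G : Type*} [Group G]

theorem card_mul_card_dvd_card_of_inf_eq_bot [Finite G] {K N : Subgroup G} [N.Normal]
    (h : K ⊓ N = ⊥) : Nat.card K * Nat.card N ∣ Nat.card G := by
  have hinj : Function.Injective ((QuotientGroup.mk' N).comp K.subtype) := by
    refine (injective_iff_map_eq_one _).2 fun x hx => ?_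
    have hxN : (x : G) ∈ K ⊓ N := ⟨x.2, (QuotientGroup.eq_one_iff _).1 hx⟩
    rw [h, mem_bot] at hxN
    exact Subtype.ext hxN
  rw [card_eq_card_quotient_mul_card_subgroup N]
  exact mul_dvd_mul_right (card_dvd_of_injective _ hinj) _

theorem card_iSup_of_commute_of_coprime {ι : Type*} [Fintype ι] {H : ι → Subgroup G}
    [∀ i, Finite (H i)]
    (hcomm : Pairwise fun i j => ∀ x y : G, x ∈ H i → y ∈ H j → Commute x y)
    (hcop : Pairwise fun i j => Nat.Coprime (Nat.card (H i)) (Nat.card (H j))) :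
    Nat.card ↥(⨆ i, H i) = ∏ i, Nat.card (H i) := by
  have := fun i => Fintype.ofFinite (H i)
  have hind : iSupIndep H :=
    independent_of_coprime_order hcomm (by simpa only [← Nat.card_eq_fintype_card] using hcop)
  rw [← noncommPiCoprod_range (hcomm := hcomm), MonoidHom.range_eq_map,
    ← Nat.card_congr (equivMapOfInjective ⊤ _
      (injective_noncommPiCoprod_of_iSupIndep hind)).toEquiv, card_top, Nat.card_pi]

end Subgroup

section Knutson

variable {G : Type*} [Group G] [Finite G]

theorem knutsonInd_finite (N : Subgroup G) : (knutsonInd N).Finite :=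
  (Nat.card G).divisors.finite_toSet.subset fun m ⟨K, _, hK⟩ =>
    Nat.mem_divisors.2 ⟨⟨_, by rw [← hK, mul_assoc]⟩, Nat.card_pos.ne'⟩

theorem exists_inf_eq_bot_factorization_iff_exists_not_dvd (N : Subgroup G) [N.Normal] {p : ℕ}
    (hp : p.Prime) :
    (∃ K : Subgroup G, K ⊓ N = ⊥ ∧
        (Nat.card K).factorization p + (Nat.card N).factorization p =
          (Nat.card G).factorization p) ↔
      ∃ m ∈ knutsonInd N, ¬ p ∣ m := by
  have key {K : Subgroup G} {m : ℕ} (h : m * Nat.card N * Nat.card K = Nat.card G) :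
      ¬ p ∣ m ↔ (Nat.card K).factorization p + (Nat.card N).factorization p =
        (Nat.card G).factorization p := by
    rw [Nat.not_dvd_iff_factorization_eq_of_mul_eq hp (by rw [← mul_assoc, h]) Nat.card_pos.ne',
      Nat.factorization_mul Nat.card_pos.ne' Nat.card_pos.ne', Finsupp.add_apply, add_comm]
  constructor
  · rintro ⟨K, hKN, hK⟩
    obtain ⟨m, hm⟩ := Subgroup.card_mul_card_dvd_card_of_inf_eq_bot hKN
    have hInd : m * Nat.card N * Nat.card K = Nat.card G := by rw [hm]; ring
    exact ⟨m, ⟨K, hKN, hInd⟩, (key hInd).2 hK⟩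
  · rintro ⟨m, ⟨K, hKN, hInd⟩, hpm⟩
    exact ⟨K, hKN, (key hInd).1 hpm⟩

end Knutson

namespace Sylow

variable {G : Type*} [Group G] [Finite G] {p : ℕ} [Fact p.Prime]

theorem card_inf_of_normal (P : Sylow p G) [P.Normal] (K : Subgroup G) :
    Nat.card ↥(K ⊓ P) = p ^ (Nat.card K).factorization p := by
  have hP : IsPGroup p ((P : Subgroup G).subgroupOf K) := P.isPGroup'.comap_subtype
  have hi : ¬ p ∣ ((P : Subgroup G).subgroupOf K).index := fun h =>
    P.not_dvd_index (h.trans (Subgroup.relIndex_dvd_index_of_normal _ _))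
  rw [← (hP.toSylow hi).card_eq_multiplicity]
  exact Nat.card_congr ((Subgroup.subgroupOfEquivOfLe inf_le_left).symm.toEquiv.trans
    (MulEquiv.subgroupCongr (Subgroup.inf_subgroupOf_left _ _)).toEquiv)

instance normal_of_isNilpotent [Group.IsNilpotent G] (P : Sylow p G) : P.Normal :=
  normal_of_normalizerCondition Group.normalizerCondition_of_isNilpotent P

end Sylow

section Nilpotent

variable {G : Type*} [Group G] [Finite G] [Group.IsNilpotent G]

theorem card_eq_prod_card_inf_sylow (P : ∀ p, Sylow p G) (K : Subgroup G) :
    Nat.card K = ∏ p : (Nat.card G).primeFactors, Nat.card ↥(K ⊓ P p) := by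
  have hcard (p : (Nat.card G).primeFactors) :
      Nat.card ↥(K ⊓ P p) = (p : ℕ) ^ (Nat.card K).factorization p :=
    have := Fact.mk (Nat.prime_of_mem_primeFactors p.2)
    (P p).card_inf_of_normal K
  rw [Fintype.prod_congr _ _ hcard,
    Finset.prod_coe_sort (f := fun p => p ^ (Nat.card K).factorization p)]
  exact (Nat.prod_pow_factorization_of_primeFactors_subset Nat.card_pos.ne'
    (Nat.primeFactors_mono (Subgroup.card_subgroup_dvd_card K) Nat.card_pos.ne')).symm

theorem exists_complement_le_sylow_iff {p : ℕ} [hp : Fact p.Prime] (N : Subgroup G)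
    (P : Sylow p G) :
    (∃ K : Subgroup G, K ≤ (P : Subgroup G) ∧ K ⊓ N = ⊥ ∧
        Nat.card K * Nat.card (N ⊓ (P : Subgroup G) : Subgroup G) =
          Nat.card (P : Subgroup G)) ↔
      ∃ K : Subgroup G, K ⊓ N = ⊥ ∧
        (Nat.card K).factorization p + (Nat.card N).factorization p =
          (Nat.card G).factorization p := by
  simp only [P.card_inf_of_normal N, P.card_eq_multiplicity]
  constructor
  · rintro ⟨K, hKP, hKN, hcard⟩
    refine ⟨K, hKN, Nat.pow_right_injective hp.out.two_le ?_⟩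
    dsimp only
    rw [pow_add, ← P.card_inf_of_normal K, inf_eq_left.2 hKP, hcard]
  · rintro ⟨K, hKN, hcard⟩
    refine ⟨K ⊓ P, inf_le_right, ?_, ?_⟩
    · exact eq_bot_iff.2 ((inf_le_inf_right N inf_le_left).trans hKN.le)
    · rw [P.card_inf_of_normal K, ← pow_add, hcard]

theorem exists_complement_of_forall_sylow (N : Subgroup G)
    (h : ∀ p : ℕ, p.Prime → ∀ P : Sylow p G,
      ∃ K : Subgroup G, K ≤ (P : Subgroup G) ∧ K ⊓ N = ⊥ ∧
        Nat.card K * Nat.card (N ⊓ (P : Subgroup G) : Subgroup G) =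
          Nat.card (P : Subgroup G)) :
    ∃ H : Subgroup G, H ⊓ N = ⊥ ∧ Nat.card H * Nat.card N = Nat.card G := by
  let P : ∀ p, Sylow p G := default
  have (p : (Nat.card G).primeFactors) : Fact (p : ℕ).Prime :=
    ⟨Nat.prime_of_mem_primeFactors p.2⟩
  choose K hKP hKN hKcard using fun p : (Nat.card G).primeFactors => h p Fact.out (P p)
  have hK (p : (Nat.card G).primeFactors) : IsPGroup p (K p) := (P p).isPGroup'.to_le (hKP p)
  have hne {p q : (Nat.card G).primeFactors} (hpq : p ≠ q) : (p : ℕ) ≠ q :=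
    Subtype.coe_injective.ne hpq
  have hcard : Nat.card ↥(⨆ p, K p) = ∏ p, Nat.card (K p) :=
    Subgroup.card_iSup_of_commute_of_coprime
      (fun p q hpq x y hx hy => Subgroup.commute_of_normal_of_disjoint _ _ inferInstance
        inferInstance (IsPGroup.disjoint_of_ne p q (hne hpq) _ _ (P p).isPGroup' (P q).isPGroup')
        x y (hKP p hx) (hKP q hy))
      (fun p q hpq => IsPGroup.coprime_card_of_ne p q (hne hpq) _ _ (hK p) (hK q))
  set H := ⨆ p, K p
  have hHP (p : (Nat.card G).primeFactors) : H ⊓ P p = K p := by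
    refine (Subgroup.eq_of_le_of_card_ge (le_inf (le_iSup K p) (hKP p)) ?_).symm
    refine Nat.le_of_dvd Nat.card_pos (Nat.Coprime.dvd_of_dvd_mul_right
      (n := ∏ q ∈ Finset.univ.erase p, Nat.card (K q)) ?_ ?_)
    · exact Nat.Coprime.prod_right fun q hq => IsPGroup.coprime_card_of_ne p q
        (hne (Finset.ne_of_mem_erase hq).symm) _ _ ((P p).isPGroup'.to_le inf_le_right) (hK q)
    · rw [Finset.mul_prod_erase _ (fun q => Nat.card (K q)) (Finset.mem_univ p), ← hcard]
      exact Subgroup.card_dvd_of_le inf_le_left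
  refine ⟨H, ?_, ?_⟩
  · rw [← Subgroup.card_eq_one, card_eq_prod_card_inf_sylow P]
    refine Finset.prod_eq_one fun p _ => ?_
    rw [inf_right_comm, hHP, hKN, Subgroup.card_bot]
  · calc Nat.card H * Nat.card N
        = ∏ p : (Nat.card G).primeFactors, Nat.card ↥((⊤ : Subgroup G) ⊓ P p) := by
          rw [card_eq_prod_card_inf_sylow P H, card_eq_prod_card_inf_sylow P N,
            ← Finset.prod_mul_distrib]
          refine Fintype.prod_congr _ _ fun p => ?_
          rw [hHP, hKcard, top_inf_eq]
      _ = Nat.card G := by rw [← card_eq_prod_card_inf_sylow P ⊤, Subgroup.card_top]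

end Nilpotent

/-- Let `G` be a finite nilpotent group and `N ⊴ G`. The following
are equivalent: (i) `N` has a complement in `G`; (ii) for every prime `p` and every
Sylow `p`-subgroup `P` of `G`, `N ∩ P` has a complement in `P`; (iii) the Knutson
subindex `𝒦(G,N) = gcd(Ind(G,N))` equals `1`. -/
theorem nilpotent_complement_tfae {G : Type*} [Group G] [Finite G]
    [Group.IsNilpotent G] (N : Subgroup G) [N.Normal] :
    ((∃ H : Subgroup G, H ⊓ N = ⊥ ∧ Nat.card H * Nat.card N = Nat.card G) ↔
      (∀ p : ℕ, p.Prime → ∀ P : Sylow p G,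
        ∃ K : Subgroup G, K ≤ (P : Subgroup G) ∧ K ⊓ N = ⊥ ∧
          Nat.card K * Nat.card (N ⊓ (P : Subgroup G) : Subgroup G) =
            Nat.card (P : Subgroup G))) ∧
    ((∀ p : ℕ, p.Prime → ∀ P : Sylow p G,
        ∃ K : Subgroup G, K ≤ (P : Subgroup G) ∧ K ⊓ N = ⊥ ∧
          Nat.card K * Nat.card (N ⊓ (P : Subgroup G) : Subgroup G) =
            Nat.card (P : Subgroup G)) ↔
      (∀ d : ℕ, IsGCDOf (knutsonInd N) d → d = 1)) := by
  refine ⟨⟨fun ⟨H, hHN, hcard⟩ p hp P => ?_, exists_complement_of_forall_sylow N⟩, ?_⟩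
  · have := Fact.mk hp
    refine (exists_complement_le_sylow_iff N P).2 ⟨H, hHN, ?_⟩
    rw [← hcard, Nat.factorization_mul Nat.card_pos.ne' Nat.card_pos.ne', Finsupp.add_apply]
  · rw [forall_isGCDOf_eq_one_iff (knutsonInd_finite N)]
    refine forall_congr' fun p => forall_congr' fun hp => ?_
    have := Fact.mk hp
    simp only [exists_complement_le_sylow_iff N,
      exists_inf_eq_bot_factorization_iff_exists_not_dvd N hp, forall_const]
end
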